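/- arXiv:2210.01041 — 2 statements merged into one kernel-verified Lean document; each statement's English description precedes it below -/
import Mathlib

section
/- Let φ(d, ḋ) = σ₀ + d_minⁿ - dⁿ - k·ḋ on [d_min, d_max] × [ḋ_min, ḋ_max] with 0 < d_min ≤ d_max, k > 0, and 0 < n < 1. Then φ is Lipschitz with respect to the 1-norm with constant max{n·d_min^{n-1}, k}. -/
open Set

/-- The derivative `n t ^ (n - 1)` of `t ^ n` is decreasing in `t` when `n ≤ 1`, so on `[a, ∞)` it
is bounded by its value at `a`. -/
theorem Real.abs_rpow_sub_rpow_le_of_le {a n x y : ℝ} (ha : 0 < a) (hn0 : 0 ≤ n) (hn1 : n ≤ 1)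
    (hx : a ≤ x) (hy : a ≤ y) :
    |x ^ n - y ^ n| ≤ n * a ^ (n - 1) * |x - y| := by
  have hderiv : ∀ t ∈ Ici a, HasDerivWithinAt (fun t : ℝ => t ^ n) (n * t ^ (n - 1)) (Ici a) t :=
    fun t ht => (Real.hasDerivAt_rpow_const (Or.inl (ha.trans_le ht).ne')).hasDerivWithinAt
  have hbound : ∀ t ∈ Ici a, ‖n * t ^ (n - 1)‖ ≤ n * a ^ (n - 1) := fun t (ht : a ≤ t) => by
    have ht0 : 0 < t := ha.trans_le ht
    rw [Real.norm_eq_abs, abs_of_nonneg (by positivity)]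
    exact mul_le_mul_of_nonneg_left (Real.rpow_le_rpow_of_nonpos ha ht (by linarith)) hn0
  simpa only [Real.norm_eq_abs] using
    (convex_Ici a).norm_image_sub_le_of_norm_hasDerivWithin_le hderiv hbound hy hx

theorem abs_add_le_max_mul_add {u v x y L₁ L₂ : ℝ} (hu : |u| ≤ L₁ * |x|) (hv : |v| ≤ L₂ * |y|) :
    |u + v| ≤ max L₁ L₂ * (|x| + |y|) :=
  calc |u + v| ≤ |u| + |v| := abs_add_le u v
    _ ≤ L₁ * |x| + L₂ * |y| := add_le_add hu hv
    _ ≤ max L₁ L₂ * |x| + max L₁ L₂ * |y| := by gcongr <;> simp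
    _ = max L₁ L₂ * (|x| + |y|) := (mul_add _ _ _).symm

theorem safety_index_lipschitz_n_lt_one_general
    (dmin dmax dotmin dotmax k σ₀ n : ℝ)
    (hdmin : 0 < dmin) (hk : 0 < k)
    (hn0 : 0 < n) (hn1 : n < 1) :
    ∀ d ∈ Set.Icc dmin dmax, ∀ ddot ∈ Set.Icc dotmin dotmax,
    ∀ d' ∈ Set.Icc dmin dmax, ∀ ddot' ∈ Set.Icc dotmin dotmax,
      |(σ₀ + dmin ^ n - d ^ n - k * ddot) - (σ₀ + dmin ^ n - d' ^ n - k * ddot')| ≤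
        max (n * dmin ^ (n - 1)) k * (|d - d'| + |ddot - ddot'|) := by
  intro d hd ddot _ d' hd' ddot' _
  have hpow : |d' ^ n - d ^ n| ≤ n * dmin ^ (n - 1) * |d - d'| := by
    rw [abs_sub_comm d]
    exact Real.abs_rpow_sub_rpow_le_of_le hdmin hn0.le hn1.le hd'.1 hd.1
  have hlin : |k * ddot' - k * ddot| ≤ k * |ddot - ddot'| := by
    rw [← mul_sub, abs_mul, abs_of_pos hk, abs_sub_comm]
  have hsplit : (σ₀ + dmin ^ n - d ^ n - k * ddot) - (σ₀ + dmin ^ n - d' ^ n - k * ddot')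
      = (d' ^ n - d ^ n) + (k * ddot' - k * ddot) := by ring
  rw [hsplit]
  exact abs_add_le_max_mul_add hpow hlin

/-- For 0 < n < 1, the safety index φ(d, ḋ) = σ₀ + d_minⁿ - dⁿ - k·ḋ is Lipschitz with
respect to the 1-norm on [d_min, d_max] × [ḋ_min, ḋ_max] with constant
max{n·d_min^(n-1), k}. -/
theorem safety_index_lipschitz_n_lt_one
    (dmin dmax dotmin dotmax k σ₀ n : ℝ)
    (hdmin : 0 < dmin) (hdd : dmin ≤ dmax) (hk : 0 < k) (hσ : 0 < σ₀)
    (hn0 : 0 < n) (hn1 : n < 1) :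
    ∀ d ∈ Set.Icc dmin dmax, ∀ ddot ∈ Set.Icc dotmin dotmax,
    ∀ d' ∈ Set.Icc dmin dmax, ∀ ddot' ∈ Set.Icc dotmin dotmax,
      |(σ₀ + dmin ^ n - d ^ n - k * ddot) - (σ₀ + dmin ^ n - d' ^ n - k * ddot')| ≤
        max (n * dmin ^ (n - 1)) k * (|d - d'| + |ddot - ddot'|) :=
  safety_index_lipschitz_n_lt_one_general dmin dmax dotmin dotmax k σ₀ n hdmin hk hn0 hn1
end

section
/- Let f : W → X be L_f-Lipschitz (1-norm), φ : X → ℝ be L_φ-Lipschitz (1-norm), μ, σ a calibrated model (‖f - μ‖₁ ≤ β·σ pointwise, σ ≥ 0), and U(w) = φ(μ(w)) + L_φ·β·σ(w). Suppose x, x₀ ∈ X and u₀ ∈ U with ‖x - x₀‖₁ ≤ τ, σ(x, u₀) ≤ σ̃, and U(x₀, u₀) < max{φ(x₀) - η, 0} - L_φ·L_f·τ - L_φ·τ - 2·L_φ·β·σ̃. Then U(x, u₀) < max{φ(x) - η, 0}. -/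
/-! Write `U(w) = φ(μ w) + L_φ β σ(w)`. Calibration and the Lipschitz bound on `φ` sandwich the
true cost: `φ(f w) ≤ U(w) ≤ φ(f w) + 2 L_φ β σ(w)`. Hence `U(x, u₀)` exceeds `U(x₀, u₀)` by at most
`L_φ L_f τ + 2 L_φ β σ̃` (moving through `φ ∘ f`), while the target `max (φ · - η) 0` drops by at
most `L_φ τ`, since `t ↦ max (t - η) 0` is 1-Lipschitz. The margin in the hypothesis covers both. -/

open Finset

theorem le_add_mul_of_abs_sub_le_mul {α : Type*} {d : α → α → ℝ} {φ : α → ℝ} {L : ℝ}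
    (hφ : ∀ x y, |φ x - φ y| ≤ L * d x y) (hL : 0 ≤ L) {x y : α} {r : ℝ} (hxy : d x y ≤ r) :
    φ x ≤ φ y + L * r := by
  have := (le_abs_self _).trans ((hφ x y).trans (mul_le_mul_of_nonneg_left hxy hL))
  linarith

theorem max_sub_zero_le_add_abs_sub (a b η : ℝ) :
    max (a - η) 0 ≤ max (b - η) 0 + |a - b| := by
  have := (le_abs_self _).trans (abs_max_sub_max_le_abs (a - η) (b - η) 0)
  rw [sub_sub_sub_cancel_right] at this
  linarith

theorem sum_abs_sub_le_of_snd_eq {m n k : ℕ} {f : ((Fin m → ℝ) × (Fin n → ℝ)) → (Fin k → ℝ)}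
    {L : ℝ} (hf : ∀ p q : (Fin m → ℝ) × (Fin n → ℝ),
      ∑ i, |f p i - f q i| ≤ L * ((∑ i, |p.1 i - q.1 i|) + ∑ j, |p.2 j - q.2 j|))
    (x y : Fin m → ℝ) (u : Fin n → ℝ) :
    ∑ i, |f (x, u) i - f (y, u) i| ≤ L * ∑ i, |x i - y i| := by
  simpa only [sub_self, abs_zero, sum_const_zero, add_zero] using hf (x, u) (y, u)

section Calibration

variable {W : Type*} {n : ℕ} {f μ : W → (Fin n → ℝ)} {σ : W → ℝ} {φ : (Fin n → ℝ) → ℝ}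
  {Lφ β : ℝ}

theorem comp_le_ucb (hφ : ∀ x y : Fin n → ℝ, |φ x - φ y| ≤ Lφ * ∑ i, |x i - y i|)
    (hLφ : 0 ≤ Lφ) (hcal : ∀ w, ∑ i, |f w i - μ w i| ≤ β * σ w) (w : W) :
    φ (f w) ≤ φ (μ w) + Lφ * β * σ w := by
  rw [mul_assoc]
  exact le_add_mul_of_abs_sub_le_mul hφ hLφ (hcal w)

theorem ucb_le_comp_add (hφ : ∀ x y : Fin n → ℝ, |φ x - φ y| ≤ Lφ * ∑ i, |x i - y i|)
    (hLφ : 0 ≤ Lφ) (hcal : ∀ w, ∑ i, |f w i - μ w i| ≤ β * σ w) (w : W) :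
    φ (μ w) + Lφ * β * σ w ≤ φ (f w) + 2 * Lφ * β * σ w := by
  have hdist : ∑ i, |μ w i - f w i| ≤ β * σ w := by
    simpa only [abs_sub_comm] using hcal w
  have := le_add_mul_of_abs_sub_le_mul hφ hLφ hdist
  linarith

end Calibration

theorem feasibility_transfer_general {nx nu : ℕ}
    (f μ : ((Fin nx → ℝ) × (Fin nu → ℝ)) → (Fin nx → ℝ))
    (σ : ((Fin nx → ℝ) × (Fin nu → ℝ)) → ℝ)
    (φ : (Fin nx → ℝ) → ℝ) (Lf Lφ β η τ σtil : ℝ)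
    (hLf : 0 ≤ Lf) (hLφ : 0 ≤ Lφ) (hβ : 0 < β)
    (hf : ∀ p q : (Fin nx → ℝ) × (Fin nu → ℝ),
      ∑ i, |f p i - f q i| ≤ Lf * ((∑ i, |p.1 i - q.1 i|) + ∑ j, |p.2 j - q.2 j|))
    (hφ : ∀ x y : Fin nx → ℝ, |φ x - φ y| ≤ Lφ * ∑ i, |x i - y i|)
    (hcal : ∀ w, ∑ i, |f w i - μ w i| ≤ β * σ w)
    (x x₀ : Fin nx → ℝ) (u₀ : Fin nu → ℝ)
    (hclose : ∑ i, |x i - x₀ i| ≤ τ)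
    (hσx : σ (x, u₀) ≤ σtil)
    (hfeas : φ (μ (x₀, u₀)) + Lφ * β * σ (x₀, u₀) <
      max (φ x₀ - η) 0 - Lφ * Lf * τ - Lφ * τ - 2 * Lφ * β * σtil) :
    φ (μ (x, u₀)) + Lφ * β * σ (x, u₀) < max (φ x - η) 0 := by
  have hucb := ucb_le_comp_add hφ hLφ hcal (x, u₀)
  have hσtil : 2 * Lφ * β * σ (x, u₀) ≤ 2 * Lφ * β * σtil :=
    mul_le_mul_of_nonneg_left hσx (by positivity)
  have hdyn : φ (f (x, u₀)) ≤ φ (f (x₀, u₀)) + Lφ * (Lf * τ) :=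
    le_add_mul_of_abs_sub_le_mul hφ hLφ
      ((sum_abs_sub_le_of_snd_eq hf x x₀ u₀).trans (mul_le_mul_of_nonneg_left hclose hLf))
  have hucb₀ := comp_le_ucb hφ hLφ hcal (x₀, u₀)
  have htarget : max (φ x₀ - η) 0 ≤ max (φ x - η) 0 + Lφ * τ := by
    have hclose' : ∑ i, |x₀ i - x i| ≤ τ := by simpa only [abs_sub_comm] using hclose
    exact (max_sub_zero_le_add_abs_sub _ _ η).trans
      (add_le_add_right ((hφ x₀ x).trans (mul_le_mul_of_nonneg_left hclose' hLφ)) _)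
  linarith

/-- Core of the discretization-equivalence result: strict feasibility with margin terms at
a discretized state x₀ (with its dataset control u₀) implies the original feasibility
condition U(x, u₀) < max{φ(x) - η, 0} at every state x within 1-norm distance τ of x₀,
provided the posterior uncertainty at (x, u₀) is bounded by σ̃. -/
theorem feasibility_transfer {nx nu : ℕ}
    (f μ : ((Fin nx → ℝ) × (Fin nu → ℝ)) → (Fin nx → ℝ))
    (σ : ((Fin nx → ℝ) × (Fin nu → ℝ)) → ℝ)
    (φ : (Fin nx → ℝ) → ℝ) (Lf Lφ β η τ σtil : ℝ)
    (hLf : 0 ≤ Lf) (hLφ : 0 ≤ Lφ) (hβ : 0 < β) (hτ : 0 ≤ τ)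
    (hf : ∀ p q : (Fin nx → ℝ) × (Fin nu → ℝ),
      ∑ i, |f p i - f q i| ≤ Lf * ((∑ i, |p.1 i - q.1 i|) + ∑ j, |p.2 j - q.2 j|))
    (hφ : ∀ x y : Fin nx → ℝ, |φ x - φ y| ≤ Lφ * ∑ i, |x i - y i|)
    (hσ : ∀ w, 0 ≤ σ w)
    (hcal : ∀ w, ∑ i, |f w i - μ w i| ≤ β * σ w)
    (x x₀ : Fin nx → ℝ) (u₀ : Fin nu → ℝ)
    (hclose : ∑ i, |x i - x₀ i| ≤ τ)
    (hσx : σ (x, u₀) ≤ σtil)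
    (hfeas : φ (μ (x₀, u₀)) + Lφ * β * σ (x₀, u₀) <
      max (φ x₀ - η) 0 - Lφ * Lf * τ - Lφ * τ - 2 * Lφ * β * σtil) :
    φ (μ (x, u₀)) + Lφ * β * σ (x, u₀) < max (φ x - η) 0 :=
  feasibility_transfer_general f μ σ φ Lf Lφ β η τ σtil hLf hLφ hβ hf hφ hcal x x₀ u₀ hclose hσx
    hfeas
end
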